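/- Fix an integer j₀ ≥ 2, let C = { Σ_{i∈F} ε_i e_i : F ⊂ ℕ finite, card F ≤ n_{j₀−1}, ε_i ∈ {−1,1} }, and let E be the smallest subset of c₀₀ containing C and closed under the operations: for every j ≥ 1 with j ≠ j₀ and every f_1 < f_2 < ⋯ < f_d in E with d ≤ 5·n_j, the element (1/m_j)(f_1 + ⋯ + f_d) belongs to E. Then for every h ∈ E, the set { k ∈ ℕ : |h(k)| > 1/m_{j₀}² } has cardinality strictly less than (5·n_{j₀−1})^{2·log₂ m_{j₀}} (note log₂ m_{j₀} = 5^{j₀−1}). -/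

import Mathlib

/-!
With `N = n_{j₀-1}`, induction on `h ∈ E` shows that for `r ≤ 2 · 5^(j₀-1)` at most
`N · (5N)^(r-1)` coordinates of `h` exceed `2⁻ʳ`. For `h = m_j⁻¹ (f_1 + ⋯ + f_d)` with
`m_j = 2^s`, `s = 5^(j-1)`, the blocks have disjoint supports and all coordinates of elements of
`E` are at most `1`. So either `r ≤ s` and no coordinate of `h` exceeds `2⁻ʳ`, or `s < r` and
each such coordinate is a coordinate of some `f_i` exceeding `2^(s-r)`; then
`5^(j-1) < 2 · 5^(j₀-1)` and `j ≠ j₀` force `j < j₀`, so `d ≤ 5 n_j ≤ 5N` and the bound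
propagates. For `r = 2 · 5^(j₀-1)`, `2⁻ʳ = m_{j₀}⁻²` and `N · (5N)^(r-1) < (5N)^r`.
-/

noncomputable section

/-- The sequence `m_j`: `m 1 = 2`, `m (j+1) = (m j)^5`, i.e. `m j = 2 ^ 5 ^ (j-1)`. -/
def mseq (j : ℕ) : ℕ := 2 ^ 5 ^ (j - 1)

/-- The sequence `n_j`: `n 1 = 4` and `n (j+1) = (5 n_j) ^ (3 · 5^j)`. -/
def nseq : ℕ → ℕ
  | 0 => 1
  | 1 => 4
  | (j + 2) => (5 * nseq (j + 1)) ^ (3 * 5 ^ (j + 1))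

/-- `f < g` for finitely supported functions: every element of the support of `f` is
less than every element of the support of `g`. -/
def BlockLt (f g : ℕ →₀ ℝ) : Prop :=
  ∀ a ∈ f.support, ∀ b ∈ g.support, a < b

/-- The action of `f ∈ c₀₀` on `x ∈ c₀₀`: `f(x) = ∑ k, f k * x k`. -/
def fapply (f x : ℕ →₀ ℝ) : ℝ := x.sum fun i v => f i * v

/-- The smallest subset `E` of `c₀₀` containing the set
`C = {∑_{i ∈ F} ±e_i : card F ≤ n_{j₀-1}}` and closed under the
`(𝓐_{5 n_j}, 1/m_j)` operations for all `j ≥ 1` with `j ≠ j₀`. -/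
inductive Eset (j₀ : ℕ) : (ℕ →₀ ℝ) → Prop
  | base (h : ℕ →₀ ℝ) (hcard : h.support.card ≤ nseq (j₀ - 1))
      (hval : ∀ k ∈ h.support, h k = 1 ∨ h k = -1) : Eset j₀ h
  | op (j d : ℕ) (hj : 1 ≤ j) (hne : j ≠ j₀) (hd : d ≤ 5 * nseq j) (f : Fin d → (ℕ →₀ ℝ))
      (hmem : ∀ i, Eset j₀ (f i))
      (hblock : ∀ i i' : Fin d, i < i' → BlockLt (f i) (f i')) :
      Eset j₀ ((mseq j : ℝ)⁻¹ • ∑ i, f i)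

open Finset Function

lemma nseq_pos : ∀ j, 0 < nseq j
  | 0 => Nat.one_pos
  | 1 => by decide
  | j + 2 => pow_pos (Nat.mul_pos (by norm_num) (nseq_pos (j + 1))) _

lemma nseq_mono : Monotone nseq := by
  refine monotone_nat_of_le_succ fun j => ?_
  match j with
  | 0 => decide
  | j + 1 =>
    calc nseq (j + 1) ≤ 5 * nseq (j + 1) := Nat.le_mul_of_pos_left _ (by norm_num)
      _ ≤ nseq (j + 2) := Nat.le_self_pow (by positivity) _

lemma mseq_cast (j : ℕ) : (mseq j : ℝ) = 2 ^ 5 ^ (j - 1) := by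
  simp [mseq]

lemma le_of_five_pow_lt_two_mul_five_pow {a b : ℕ} (h : 5 ^ a < 2 * 5 ^ b) : a ≤ b := by
  by_contra! hba
  have : 5 ^ (b + 1) ≤ 5 ^ a := Nat.pow_le_pow_right (by norm_num) hba
  rw [pow_succ] at this
  omega

section Blocks

variable {ι α M : Type*}

lemma pairwise_disjoint_support_of_blockLt {d : ℕ} {f : Fin d → ℕ →₀ ℝ}
    (hf : ∀ i i', i < i' → BlockLt (f i) (f i')) :
    Pairwise (Disjoint on fun i => (f i).support) := by
  intro i i' hne
  refine Finset.disjoint_left.2 fun k hk hk' => ?_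
  rcases lt_or_gt_of_ne hne with hlt | hlt
  · exact lt_irrefl k (hf i i' hlt k hk k hk')
  · exact lt_irrefl k (hf i' i hlt k hk' k hk)

lemma exists_sum_apply_eq_of_ne_zero [Fintype ι] [AddCommMonoid M] {f : ι → α →₀ M}
    (hf : Pairwise (Disjoint on fun i => (f i).support)) {k : α} (hk : (∑ i, f i) k ≠ 0) :
    ∃ i, (∑ i, f i) k = f i k := by
  rw [Finsupp.finsetSum_apply] at hk ⊢
  obtain ⟨i, -, hi⟩ := Finset.exists_ne_zero_of_sum_ne_zero hk
  refine ⟨i, Finset.sum_eq_single i (fun i' _ hne => ?_) (by simp)⟩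
  by_contra h0
  exact Finset.disjoint_left.1 (hf hne) (Finsupp.mem_support_iff.2 h0)
    (Finsupp.mem_support_iff.2 hi)

variable [Fintype ι] {f : ι → α →₀ ℝ}

lemma abs_smul_sum_apply_le (hf : Pairwise (Disjoint on fun i => (f i).support))
    (hf1 : ∀ i k, |f i k| ≤ 1) {c : ℝ} (hc : 0 ≤ c) (k : α) :
    |(c • ∑ i, f i) k| ≤ c := by
  rw [Finsupp.smul_apply, smul_eq_mul, abs_mul, abs_of_nonneg hc]
  refine mul_le_of_le_one_right hc ?_
  by_cases h0 : (∑ i, f i) k = 0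
  · simp [h0]
  · obtain ⟨i, hi⟩ := exists_sum_apply_eq_of_ne_zero hf h0
    exact hi ▸ hf1 i k

def largeCoords (t : ℝ) (h : α →₀ ℝ) : Finset α :=
  h.support.filter fun k => t < |h k|

lemma coe_largeCoords {t : ℝ} (ht : 0 ≤ t) (h : α →₀ ℝ) :
    (largeCoords t h : Set α) = {k | t < |h k|} := by
  ext k
  simp only [largeCoords, Finset.coe_filter, Finsupp.mem_support_iff, Set.mem_ofPred_eq,
    and_iff_right_iff_imp]
  intro hk h0
  rw [h0, abs_zero] at hk
  linarith

lemma largeCoords_eq_empty {t : ℝ} {h : α →₀ ℝ} (hh : ∀ k, |h k| ≤ t) :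
    largeCoords t h = ∅ :=
  Finset.filter_false_of_mem fun k _ => not_lt.2 (hh k)

lemma largeCoords_smul_sum_subset [DecidableEq α]
    (hf : Pairwise (Disjoint on fun i => (f i).support)) {c t : ℝ} (hc : 0 < c) (ht : 0 ≤ t) :
    largeCoords (c * t) (c • ∑ i, f i) ⊆ univ.biUnion fun i => largeCoords t (f i) := by
  intro k hk
  simp only [largeCoords, Finset.mem_filter, Finsupp.mem_support_iff, Finsupp.smul_apply,
    smul_eq_mul, abs_mul, abs_of_pos hc] at hk
  obtain ⟨hk0, hlt⟩ := hk
  obtain ⟨i, hi⟩ := exists_sum_apply_eq_of_ne_zero hf (right_ne_zero_of_mul hk0)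
  rw [hi] at hlt
  have hti : t < |f i k| := lt_of_mul_lt_mul_left hlt hc.le
  simp only [largeCoords, Finset.mem_biUnion, Finset.mem_univ, Finset.mem_filter,
    Finsupp.mem_support_iff, true_and]
  exact ⟨i, fun h0 => by simp [h0] at hti; linarith, hti⟩

end Blocks

lemma Eset.abs_apply_le_one {j₀ : ℕ} {h : ℕ →₀ ℝ} (hh : Eset j₀ h) (k : ℕ) : |h k| ≤ 1 := by
  induction hh generalizing k with
  | base g _ hval =>
    by_cases hk : g k = 0
    · simp [hk]
    · rcases hval k (Finsupp.mem_support_iff.2 hk) with h1 | h1 <;> simp [h1]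
  | op j d _ _ _ f _ hblock ih =>
    have hm : (1 : ℝ) ≤ mseq j := by rw [mseq_cast]; exact one_le_pow₀ one_le_two
    exact (abs_smul_sum_apply_le (pairwise_disjoint_support_of_blockLt hblock) ih
      (by positivity) k).trans (inv_le_one_of_one_le₀ hm)

theorem Eset.card_largeCoords_le {j₀ : ℕ} (hj₀ : 1 ≤ j₀) {h : ℕ →₀ ℝ} (hh : Eset j₀ h)
    {r : ℕ} (hr : r ≤ 2 * 5 ^ (j₀ - 1)) :
    #(largeCoords ((2 : ℝ) ^ r)⁻¹ h) ≤ nseq (j₀ - 1) * (5 * nseq (j₀ - 1)) ^ (r - 1) := by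
  have hN := nseq_pos (j₀ - 1)
  induction hh generalizing r with
  | base g hcard _ =>
    calc #(largeCoords _ g) ≤ #g.support := Finset.card_filter_le _ _
      _ ≤ nseq (j₀ - 1) := hcard
      _ ≤ _ := Nat.le_mul_of_pos_right _ (by positivity)
  | op j d hj hne hd f hmem hblock ih =>
    have hdisj := pairwise_disjoint_support_of_blockLt hblock
    have hm : (mseq j : ℝ)⁻¹ = ((2 : ℝ) ^ 5 ^ (j - 1))⁻¹ := by rw [mseq_cast]
    rcases le_or_gt r (5 ^ (j - 1)) with hrs | hsr
    · rw [largeCoords_eq_empty fun k => ?_, Finset.card_empty]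
      · exact Nat.zero_le _
      refine (abs_smul_sum_apply_le hdisj (fun i => (hmem i).abs_apply_le_one)
        (by positivity) k).trans ?_
      rw [hm]
      exact inv_anti₀ (by positivity) (pow_le_pow_right₀ one_le_two hrs)
    · set s := 5 ^ (j - 1)
      set N := nseq (j₀ - 1)
      have hjj₀ : j ≤ j₀ - 1 := by
        have := le_of_five_pow_lt_two_mul_five_pow (hsr.trans_le hr)
        omega
      have hthr : ((2 : ℝ) ^ r)⁻¹ = (mseq j : ℝ)⁻¹ * ((2 : ℝ) ^ (r - s))⁻¹ := by
        rw [hm, ← mul_inv, ← pow_add, Nat.add_sub_cancel' hsr.le]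
      calc #(largeCoords _ _)
          ≤ #(univ.biUnion fun i => largeCoords ((2 : ℝ) ^ (r - s))⁻¹ (f i)) := by
            rw [hthr]
            exact Finset.card_le_card
              (largeCoords_smul_sum_subset hdisj (by rw [hm]; positivity) (by positivity))
        _ ≤ ∑ i, #(largeCoords ((2 : ℝ) ^ (r - s))⁻¹ (f i)) := Finset.card_biUnion_le
        _ ≤ ∑ _i : Fin d, N * (5 * N) ^ (r - s - 1) :=
            Finset.sum_le_sum fun i _ => ih i ((Nat.sub_le r s).trans hr)
        _ = d * (N * (5 * N) ^ (r - s - 1)) := by simp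
        _ ≤ 5 * N * (N * (5 * N) ^ (r - s - 1)) := by
            gcongr
            exact hd.trans (Nat.mul_le_mul_left 5 (nseq_mono hjj₀))
        _ = N * (5 * N) ^ (r - s - 1 + 1) := by ring
        _ ≤ N * (5 * N) ^ (r - 1) := by
            have : 0 < s := by positivity
            gcongr
            · omega
            · omega

/-- For every `h ∈ E` (the saturation avoiding the weight `m_{j₀}`),
the set `{k : |h(k)| > 1/m_{j₀}²}` has cardinality strictly less than
`(5 n_{j₀-1}) ^ (2 · log₂ m_{j₀})`, where `log₂ m_{j₀} = 5 ^ (j₀ - 1)`. -/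
theorem statement18 (j₀ : ℕ) (hj₀ : 2 ≤ j₀) (h : ℕ →₀ ℝ) (hh : Eset j₀ h) :
    ({k : ℕ | (1 : ℝ) / ((mseq j₀ : ℝ)) ^ 2 < |h k|}).Finite ∧
    ({k : ℕ | (1 : ℝ) / ((mseq j₀ : ℝ)) ^ 2 < |h k|}).ncard
      < (5 * nseq (j₀ - 1)) ^ (2 * 5 ^ (j₀ - 1)) := by
  set L := 2 * 5 ^ (j₀ - 1)
  have hL : 0 < L := by positivity
  have hthr : (1 : ℝ) / (mseq j₀ : ℝ) ^ 2 = ((2 : ℝ) ^ L)⁻¹ := by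
    rw [mseq_cast, one_div, ← pow_mul, mul_comm]
  rw [hthr, ← coe_largeCoords (by positivity), Set.ncard_coe_finset]
  refine ⟨Finset.finite_toSet _, ?_⟩
  have hN := nseq_pos (j₀ - 1)
  calc #(largeCoords ((2 : ℝ) ^ L)⁻¹ h)
      ≤ nseq (j₀ - 1) * (5 * nseq (j₀ - 1)) ^ (L - 1) :=
        hh.card_largeCoords_le (by omega) le_rfl
    _ < 5 * nseq (j₀ - 1) * (5 * nseq (j₀ - 1)) ^ (L - 1) := by gcongr; omega
    _ = (5 * nseq (j₀ - 1)) ^ L := by rw [← pow_succ', Nat.sub_add_cancel hL]
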